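/- Let P = ∏_{1≤j<k≤15} (1 + t_j + t_k) in 𝔽₂[t₁,…,t₁₅], and for d ≥ 0 let P_d denote the homogeneous component of P of degree d. Then P₁ and P₂ lie in the ideal generated by e₁ and e₂, and P₄ is congruent to e₄ modulo the ideal generated by e₁, e₂, e₃. -/

import Mathlib

/-!
`P` is symmetric, so by the fundamental theorem of symmetric polynomials each homogeneous
component `P_d` is a polynomial in `e₁, e₂, …` of weighted degree `d`. Every monomial of weight `d`
in the `eᵢ` other than `e_d` itself contains some `eᵢ` with `0 < i < d`; hence `P₁, P₂ ∈ (e₁, e₂)`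
and `P₄ ≡ a • e₄` modulo `(e₁, e₂, e₃)` for some `a ∈ 𝔽₂`. To find `a`, evaluate at the point
`x` with exactly four coordinates equal to `1`: there `e_k(x) = (4 choose k)`, which is `0` for
`k = 1, 2, 3` and `1` for `k = 4`. Substituting `tᵢ ↦ xᵢ X` turns `P` into `(1 + X)^44`, one
factor for each of the `4 · 11` pairs split by `x`, so `P₄(x) = (44 choose 4)` is odd and `a = 1`.
-/

open MvPolynomial Finset

/-- The `i`-th elementary symmetric polynomial in `𝔽₂[t₁,…,t₁₅]`. -/
noncomputable def e (i : ℕ) : MvPolynomial (Fin 15) (ZMod 2) :=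
  esymm (Fin 15) (ZMod 2) i

/-- `P = ∏_{1≤j<k≤15} (1 + t_j + t_k)` in `𝔽₂[t₁,…,t₁₅]`. -/
noncomputable def P : MvPolynomial (Fin 15) (ZMod 2) :=
  ∏ p ∈ univ.filter (fun p : Fin 15 × Fin 15 => p.1 < p.2), (1 + X p.1 + X p.2)

namespace Finset

variable {ι M : Type*} [LinearOrder ι] [Fintype ι] [CommMonoid M]

theorem prod_filter_lt_eq_prod_filter_not_isDiag (f : Sym2 ι → M) :
    ∏ p ∈ univ.filter (fun p : ι × ι => p.1 < p.2), f s(p.1, p.2) =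
      ∏ z ∈ univ.filter (fun z : Sym2 ι => ¬ z.IsDiag), f z := by
  refine prod_nbij' (fun p => s(p.1, p.2)) (fun z => (z.inf, z.sup)) ?_ ?_ ?_ ?_ ?_
  · rintro ⟨a, b⟩ h
    simpa using (mem_filter.mp h).2.ne
  · intro z hz
    induction z using Sym2.ind
    simpa [eq_comm] using hz
  · rintro ⟨a, b⟩ h
    simpa using (mem_filter.mp h).2.le
  · intro z _
    exact Sym2.sortEquiv.symm_apply_apply z
  · intro _ _
    rfl

theorem prod_filter_lt_perm (q : ι → ι → M) (hq : ∀ a b, q a b = q b a) (g : Equiv.Perm ι) :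
    ∏ p ∈ univ.filter (fun p : ι × ι => p.1 < p.2), q (g p.1) (g p.2) =
      ∏ p ∈ univ.filter (fun p : ι × ι => p.1 < p.2), q p.1 p.2 := by
  let f : Sym2 ι → M := Sym2.lift ⟨q, hq⟩
  calc ∏ p ∈ univ.filter (fun p : ι × ι => p.1 < p.2), q (g p.1) (g p.2)
      = ∏ z ∈ univ.filter (fun z : Sym2 ι => ¬ z.IsDiag), f (z.map g) :=
        prod_filter_lt_eq_prod_filter_not_isDiag (fun z => f (z.map g))
    _ = ∏ z ∈ univ.filter (fun z : Sym2 ι => ¬ z.IsDiag), f z := by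
        refine prod_nbij' (Sym2.map g) (Sym2.map g.symm) ?_ ?_ ?_ ?_ fun _ _ => rfl
        all_goals
          simp [Sym2.isDiag_map g.injective, Sym2.isDiag_map g.symm.injective, Sym2.map_map]
    _ = _ := (prod_filter_lt_eq_prod_filter_not_isDiag f).symm

end Finset

namespace MvPolynomial

variable {σ R : Type*}

section CommSemiring

variable [CommSemiring R]

theorem coeff_aeval_C_mul_X (c : σ → R) (f : MvPolynomial σ R) (d : ℕ) :
    (aeval (fun i => Polynomial.C (c i) * Polynomial.X) f).coeff d =
      eval c (homogeneousComponent d f) := by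
  induction f using MvPolynomial.induction_on' with
  | monomial v a =>
    rw [homogeneousComponent_of_mem (isHomogeneous_monomial (R := R) (d := v) a rfl)]
    simp only [aeval_monomial, Finsupp.prod, mul_pow, prod_mul_distrib, ← map_pow, ← map_prod,
      prod_pow_eq_pow_sum, Polynomial.algebraMap_eq, ← mul_assoc, ← map_mul,
      Polynomial.coeff_C_mul_X_pow]
    split_ifs <;> simp_all [eval_monomial, Finsupp.prod, Finsupp.degree_apply]
  | add p q hp hq => simp only [map_add, Polynomial.coeff_add, hp, hq]

variable [Fintype σ]

theorem isHomogeneous_esymm (k : ℕ) : (esymm σ R k).IsHomogeneous k := by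
  refine IsHomogeneous.sum _ _ _ fun t ht => ?_
  simpa [(mem_powersetCard.mp ht).2] using
    IsHomogeneous.prod t X (fun _ => 1) fun i _ => isHomogeneous_X R i

theorem eval_indicator_esymm [DecidableEq σ] (s : Finset σ) (k : ℕ) :
    eval (fun i => if i ∈ s then 1 else 0) (esymm σ R k) = (#s).choose k := by
  have hsub : (powersetCard k univ).filter (· ⊆ s) = powersetCard k s := by
    ext t
    simp only [mem_filter, mem_powersetCard, subset_univ, true_and]
    tauto
  simp only [esymm, map_sum, map_prod, eval_X, prod_boole, ← card_powersetCard, ← hsub,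
    card_filter, Nat.cast_sum, Nat.cast_ite, Nat.cast_one, Nat.cast_zero]
  rfl

theorem isHomogeneous_prod_esymm_pow {n : ℕ} (v : Fin n → ℕ) :
    (∏ i : Fin n, esymm σ R ((i : ℕ) + 1) ^ v i).IsHomogeneous
      (∑ i : Fin n, ((i : ℕ) + 1) * v i) :=
  IsHomogeneous.prod _ _ _ fun _ _ => (isHomogeneous_esymm _).pow _

theorem prod_esymm_pow_eq_esymm {n d : ℕ} (v : Fin n → ℕ)
    (hv : ∑ i : Fin n, ((i : ℕ) + 1) * v i = d) (hd : ∀ i : Fin n, 0 < v i → d ≤ (i : ℕ) + 1) :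
    ∏ i : Fin n, esymm σ R ((i : ℕ) + 1) ^ v i = esymm σ R d := by
  have hle : ∀ i : Fin n, ((i : ℕ) + 1) * v i ≤ d := fun i =>
    hv ▸ single_le_sum (f := fun i : Fin n => ((i : ℕ) + 1) * v i) (by simp) (mem_univ i)
  by_cases hpos : ∃ i, 0 < v i
  · obtain ⟨i, hi⟩ := hpos
    have hvi : v i = 1 := by nlinarith [hle i, hd i hi]
    have hdi : (i : ℕ) + 1 = d := by nlinarith [hle i, hd i hi]
    have hvj : ∀ j, j ≠ i → v j = 0 := by
      intro j hji
      by_contra hj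
      have hpair := sum_le_sum_of_subset (f := fun i : Fin n => ((i : ℕ) + 1) * v i)
        (subset_univ {j, i})
      rw [sum_pair hji, hv, hvi, mul_one, hdi] at hpair
      have : 0 < ((j : ℕ) + 1) * v j := Nat.mul_pos j.val.succ_pos (Nat.pos_of_ne_zero hj)
      omega
    rw [prod_eq_single i (fun j _ hji => by rw [hvj j hji, pow_zero]) (by simp), hvi, pow_one,
      hdi]
  · push Not at hpos
    have hv0 : ∀ i, v i = 0 := fun i => Nat.le_zero.mp (hpos i)
    simp only [hv0, mul_zero, sum_const_zero] at hv
    simp [hv0, ← hv, esymm_zero]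

theorem prod_esymm_pow_mem_or_eq_esymm {n d : ℕ} {I : Ideal (MvPolynomial σ R)}
    (hI : ∀ k, 0 < k → k < d → esymm σ R k ∈ I) (v : Fin n → ℕ)
    (hv : ∑ i : Fin n, ((i : ℕ) + 1) * v i = d) :
    ∏ i : Fin n, esymm σ R ((i : ℕ) + 1) ^ v i ∈ I ∨
      ∏ i : Fin n, esymm σ R ((i : ℕ) + 1) ^ v i = esymm σ R d := by
  by_cases h : ∃ i, 0 < v i ∧ (i : ℕ) + 1 < d
  · obtain ⟨i, hvi, hid⟩ := h
    refine .inl (I.mem_of_dvd ?_ (hI _ i.succ_pos hid))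
    exact (dvd_pow_self _ hvi.ne').trans (dvd_prod_of_mem _ (mem_univ i))
  · push Not at h
    exact .inr (prod_esymm_pow_eq_esymm v hv h)

end CommSemiring

section CommRing

variable [CommRing R] [Fintype σ]

theorem exists_homogeneousComponent_aeval_esymm_sub_C_mul_esymm_mem {n d : ℕ}
    {I : Ideal (MvPolynomial σ R)} (hI : ∀ k, 0 < k → k < d → esymm σ R k ∈ I)
    (F : MvPolynomial (Fin n) R) :
    ∃ a : R, homogeneousComponent d (aeval (fun i : Fin n => esymm σ R (i + 1)) F) -
      C a * esymm σ R d ∈ I := by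
  induction F using MvPolynomial.induction_on' with
  | monomial v c =>
    rw [aeval_monomial, Finsupp.prod_fintype _ _ (fun _ => pow_zero _), algebraMap_eq,
      homogeneousComponent_C_mul, homogeneousComponent_of_mem (isHomogeneous_prod_esymm_pow v)]
    split_ifs with hd
    · rcases prod_esymm_pow_mem_or_eq_esymm hI v hd.symm with hmem | heq
      · exact ⟨0, by simpa using I.mul_mem_left (C c) hmem⟩
      · exact ⟨c, by simp [heq]⟩
    · exact ⟨0, by simp⟩
  | add F G hF hG =>
    obtain ⟨a, ha⟩ := hF
    obtain ⟨b, hb⟩ := hG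
    refine ⟨a + b, ?_⟩
    convert I.add_mem ha hb using 1
    simp only [map_add]
    ring

theorem exists_homogeneousComponent_sub_C_mul_esymm_mem {f : MvPolynomial σ R}
    (hf : f.IsSymmetric) {d : ℕ} {I : Ideal (MvPolynomial σ R)}
    (hI : ∀ k, 0 < k → k < d → esymm σ R k ∈ I) :
    ∃ a : R, homogeneousComponent d f - C a * esymm σ R d ∈ I := by
  obtain ⟨F, hF⟩ := esymmAlgHom_surjective R le_rfl ⟨f, hf⟩
  have hfF : f = aeval (fun i : Fin (Fintype.card σ) => esymm σ R (i + 1)) F := by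
    rw [← esymmAlgHom_apply, hF]
  exact hfF ▸ exists_homogeneousComponent_aeval_esymm_sub_C_mul_esymm_mem hI F

theorem homogeneousComponent_mem_of_isSymmetric {f : MvPolynomial σ R} (hf : f.IsSymmetric)
    {d : ℕ} (hd : 0 < d) {I : Ideal (MvPolynomial σ R)}
    (hI : ∀ k, 0 < k → k ≤ d → esymm σ R k ∈ I) :
    homogeneousComponent d f ∈ I := by
  obtain ⟨a, ha⟩ := exists_homogeneousComponent_sub_C_mul_esymm_mem hf
    fun k hk hkd => hI k hk hkd.le
  simpa using I.add_mem ha (I.mul_mem_left (C a) (hI d hd le_rfl))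

end CommRing

end MvPolynomial

theorem isSymmetric_P : P.IsSymmetric := fun g => by
  simp only [P, map_prod, map_add, map_one, rename_X]
  exact prod_filter_lt_perm (fun a b => 1 + X a + X b) (fun a b => by ring) g

def fourOnes : Fin 15 → ZMod 2 := fun i => if i ∈ ({0, 1, 2, 3} : Finset (Fin 15)) then 1 else 0

theorem eval_fourOnes_e (k : ℕ) : eval fourOnes (e k) = (Nat.choose 4 k : ZMod 2) :=
  eval_indicator_esymm _ k

theorem aeval_fourOnes_mul_X_P :
    aeval (fun i => Polynomial.C (fourOnes i) * Polynomial.X) P = (1 + Polynomial.X) ^ 44 := by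
  have hfactor (a b : ZMod 2) :
      1 + Polynomial.C a * Polynomial.X + Polynomial.C b * Polynomial.X =
        (1 + Polynomial.X) ^ (a + b).val := by
    rw [add_assoc, ← add_mul, ← Polynomial.C_add]
    obtain h | h : a + b = 0 ∨ a + b = 1 := by decide +revert
    all_goals simp [h, ZMod.val_one]
  have hcount : ∑ p ∈ univ.filter (fun p : Fin 15 × Fin 15 => p.1 < p.2),
      (fourOnes p.1 + fourOnes p.2).val = 44 := by
    decide
  simp only [P, map_prod, map_add, map_one, aeval_X, hfactor, prod_pow_eq_pow_sum, hcount]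

theorem eval_fourOnes_homogeneousComponent_four_P :
    eval fourOnes (homogeneousComponent 4 P) = 1 := by
  rw [← coeff_aeval_C_mul_X, aeval_fourOnes_mul_X_P, Polynomial.coeff_one_add_X_pow]
  decide

/-- the homogeneous components `P₁` and `P₂` of `P` lie in the
ideal `(e₁, e₂)`, and `P₄` is congruent to `e₄` modulo the ideal `(e₁, e₂, e₃)`. -/
theorem lambda2_spin15_low_degrees :
    homogeneousComponent 1 P ∈ Ideal.span {e 1, e 2} ∧
    homogeneousComponent 2 P ∈ Ideal.span {e 1, e 2} ∧
    homogeneousComponent 4 P - e 4 ∈ Ideal.span {e 1, e 2, e 3} := by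
  have hI₂ : ∀ k, 0 < k → k ≤ 2 → esymm (Fin 15) (ZMod 2) k ∈ Ideal.span {e 1, e 2} := by
    intro k hk hk2
    interval_cases k <;> exact Ideal.subset_span (by simp [e])
  refine ⟨homogeneousComponent_mem_of_isSymmetric isSymmetric_P one_pos
      fun k hk hk1 => hI₂ k hk (by omega),
    homogeneousComponent_mem_of_isSymmetric isSymmetric_P two_pos hI₂, ?_⟩
  obtain ⟨a, ha⟩ := exists_homogeneousComponent_sub_C_mul_esymm_mem isSymmetric_P
    (d := 4) (I := Ideal.span {e 1, e 2, e 3}) fun k hk hk4 => by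
      interval_cases k <;> exact Ideal.subset_span (by simp [e])
  have hker : Ideal.span {e 1, e 2, e 3} ≤ RingHom.ker (eval fourOnes) := by
    simp only [Ideal.span_le, Set.insert_subset_iff, Set.singleton_subset_iff, SetLike.mem_coe,
      RingHom.mem_ker, eval_fourOnes_e]
    decide
  have ha1 : a = 1 := by
    have h := hker ha
    rw [RingHom.mem_ker, map_sub, map_mul, eval_C, eval_fourOnes_homogeneousComponent_four_P,
      ← e, eval_fourOnes_e, Nat.choose_self, Nat.cast_one, mul_one, sub_eq_zero] at h
    exact h.symm
  simpa [ha1, e] using ha
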